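/- arXiv:1112.2466 — 11 statements merged into one kernel-verified Lean document; each statement's English description precedes it below -/
import Mathlib

section
/- Let R be a commutative ring, A a square matrix of order n over R, and A_r = [A | A_{n+1} | ... | A_{n+r}] an n×(n+r) matrix whose extra columns satisfy A_{n+j} = Σ_{i=1}^{n+j-1} p_{i,j} A_i for j = 1,...,r. Let P be the (n+r-1)×r matrix whose (i,j) entry is p_{i,j} for i ≤ n+j-1, equals -1 for i = n+j, and 0 for i > n+j. For indices 1 ≤ j_1 < ... < j_r < n+r, let M be the determinant of the n×n submatrix of A_r obtained by deleting columns j_1,...,j_r, and let Q be the r×r submatrix of P consisting of rows j_1,...,j_r. Then M = (-1)^{nr + j_1+...+j_r + r(r-1)/2} · det(Q) · det(A). -/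
/-!
Stack under `A_r` the unit rows `e_{j_1}, …, e_{j_r}` to get a square matrix `B`, and let `U` have
as columns the first `n` unit vectors followed by the columns of `P` (completed by a last row).
The column relations say exactly `A_r P = 0`, so `B U` is block lower triangular with diagonal
blocks `A` and `Q`, and `det B · det U = det A · det Q`. The matrix `U` is upper triangular with
`det U = (-1)^r`, while expanding `det B` along its unit rows leaves the minor `M`, with the sign
of the shuffle that moves the kept columns in front of the deleted ones.
-/

open Matrix

section

variable {R : Type*} [CommRing R]

namespace Matrix

theorem det_of_bottom_rows_single {n r : ℕ} (B : Matrix (Fin (n + r)) (Fin (n + r)) R)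
    (c : Fin n → Fin (n + r)) (d : Fin r → Fin (n + r)) (hc : StrictMono c) (hd : StrictMono d)
    (hdisj : ∀ k t, c k ≠ d t) (hB : ∀ t, B (Fin.natAdd n t) = Pi.single (d t) 1) :
    B.det = (-1) ^ (n * r + ∑ t, (d t : ℕ) + r.choose 2) *
      det (of fun i k => B (Fin.castAdd r i) (c k)) := by
  induction r with
  | zero =>
    obtain rfl : c = id := hc.eq_id
    simp only [mul_zero, Finset.univ_eq_empty, Finset.sum_empty, Nat.choose_zero_succ, add_zero,
      pow_zero, one_mul]
    rfl
  | succ r ih =>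
    obtain ⟨m, hm⟩ : ∃ m, d (Fin.last r) = m := ⟨_, rfl⟩
    choose c' hc' using fun k => (Fin.exists_succAbove_eq (hm ▸ hdisj k (Fin.last r)) :
      ∃ z : Fin (n + r), _)
    choose d' hd' using fun t => (Fin.exists_succAbove_eq
      (hm ▸ hd.injective.ne (Fin.castSucc_lt_last t).ne) : ∃ z : Fin (n + r), _)
    have hd'_val : ∀ t, (d' t : ℕ) = d t.castSucc := by
      intro t
      have hlt : d t.castSucc < m := hm ▸ hd (Fin.castSucc_lt_last t)
      rw [← hd' t] at hlt ⊢
      rw [Fin.succAbove_of_castSucc_lt _ _ ((Fin.succAbove_lt_iff_castSucc_lt _ _).mp hlt),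
        Fin.val_castSucc]
    have hc'_mono : StrictMono c' := fun a b hab => by
      simpa only [← (Fin.strictMono_succAbove m).lt_iff_lt, hc'] using hc hab
    have hd'_mono : StrictMono d' := fun a b hab => by
      simpa only [← (Fin.strictMono_succAbove m).lt_iff_lt, hd'] using
        hd (Fin.castSucc_lt_castSucc_iff.mpr hab)
    have hdisj' : ∀ k t, c' k ≠ d' t := fun k t h => hdisj k t.castSucc (by rw [← hc', ← hd', h])
    have hB' : ∀ t, B.submatrix Fin.castSucc m.succAbove (Fin.natAdd n t) = Pi.single (d' t) 1 := by
      intro t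
      ext j
      simp [hB, Pi.single_apply, ← hd']
    have hlast : B (Fin.last (n + r)) = Pi.single m 1 := hm ▸ hB (Fin.last r)
    have hminor : (of fun i k => B.submatrix Fin.castSucc m.succAbove (Fin.castAdd r i) (c' k)) =
        of fun i k => B (Fin.castAdd (r + 1) i) (c k) := by
      ext i k
      simp only [of_apply, submatrix_apply, hc']
      rfl
    have hsum : ∑ t, (d t : ℕ) = ∑ t, (d' t : ℕ) + m := by
      simp only [Fin.sum_univ_castSucc, hd'_val, hm]
    rw [det_succ_row (n := n + r) B (Fin.last (n + r))]
    simp only [hlast, Pi.single_apply, mul_ite, ite_mul, mul_one, mul_zero, zero_mul,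
      Finset.sum_ite_eq', Finset.mem_univ, if_true, Fin.succAbove_last]
    rw [ih _ c' d' hc'_mono hd'_mono hdisj' hB', hminor, hsum, Nat.choose_succ_succ',
      Nat.choose_one_right, Fin.val_last, ← mul_assoc, ← pow_add]
    ring_nf

theorem det_fromRows_submatrix_one {n r : ℕ} (M : Matrix (Fin n) (Fin (n + r)) R)
    (c : Fin n → Fin (n + r)) (d : Fin r → Fin (n + r)) (hc : StrictMono c) (hd : StrictMono d)
    (hdisj : ∀ k t, c k ≠ d t) :
    ((fromRows M ((1 : Matrix (Fin (n + r)) (Fin (n + r)) R).submatrix d id)).submatrix id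
      finSumFinEquiv).det =
      (-1) ^ (n * r + ∑ t, (d t : ℕ) + r.choose 2) * det (of fun i k => M i (c k)) := by
  set B := fromRows M ((1 : Matrix (Fin (n + r)) (Fin (n + r)) R).submatrix d id)
  have hreindex : B.submatrix id finSumFinEquiv =
      (B.submatrix finSumFinEquiv.symm id).submatrix finSumFinEquiv finSumFinEquiv := by
    rw [submatrix_submatrix, Equiv.symm_comp_self]
    rfl
  rw [hreindex, det_submatrix_equiv_self, det_of_bottom_rows_single _ c d hc hd hdisj]
  · simp [B]
  · intro t
    ext j
    simp [B, one_apply, Pi.single_apply, eq_comm]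

end Matrix

/-- The coefficient matrix `P` of the paper, completed by a last row `(0, …, 0, -1)`. -/
def extensionCoeffs (n r : ℕ) (p : ℕ → ℕ → R) : Matrix (Fin (n + r)) (Fin r) R :=
  of fun k t => if (k : ℕ) < n + t then p k t else if (k : ℕ) = n + t then -1 else 0

theorem mul_extensionCoeffs_eq_zero {ι : Type*} {n r : ℕ} (M : Matrix ι (Fin (n + r)) R)
    (p : ℕ → ℕ → R)
    (hcol : ∀ (j : Fin r) (i : ι), M i ⟨n + j, Nat.add_lt_add_left j.isLt n⟩ =
      ∑ m : Fin (n + j), p m j * M i (Fin.castLE (Nat.add_le_add_left j.isLt.le n) m)) :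
    M * extensionCoeffs n r p = 0 := by
  ext i t
  have hsplit : ∀ k : Fin (n + r), M i k * extensionCoeffs n r p k t =
      (if (k : ℕ) < n + t then p k t * M i k else 0) +
        if k = ⟨n + t, Nat.add_lt_add_left t.isLt n⟩ then -M i k else 0 := by
    intro k
    simp only [extensionCoeffs, of_apply, Fin.ext_iff]
    split_ifs <;> first | omega | ring
  have hlower : ∑ k : Fin (n + r), (if (k : ℕ) < n + t then p k t * M i k else 0) =
      ∑ m : Fin (n + t), p m t * M i (Fin.castLE (Nat.add_le_add_left t.isLt.le n) m) := by
    refine (Fintype.sum_of_injective (Fin.castLE (Nat.add_le_add_left t.isLt.le n))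
      (Fin.castLE_injective _) _ _ ?_ ?_).symm
    · rintro k hk
      rw [if_neg]
      exact fun hlt => hk ⟨⟨k, hlt⟩, rfl⟩
    · intro m
      simp
  rw [mul_apply, Finset.sum_congr rfl fun k _ => hsplit k, Finset.sum_add_distrib, hlower,
    Fintype.sum_ite_eq', ← hcol, add_neg_cancel, Matrix.zero_apply]

theorem det_extensionCoeffs_submatrix_natAdd (n r : ℕ) (p : ℕ → ℕ → R) :
    ((extensionCoeffs n r p).submatrix (Fin.natAdd n) id).det = (-1) ^ r := by
  have htri : ((extensionCoeffs n r p).submatrix (Fin.natAdd n) id).IsUpperTriangular := by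
    intro t s hst
    have : (s : ℕ) < t := hst
    simp only [submatrix_apply, extensionCoeffs, of_apply, Fin.val_natAdd, id_eq]
    rw [if_neg (by omega), if_neg (by omega)]
  rw [det_of_isUpperTriangular htri]
  simp [extensionCoeffs]

theorem det_fromCols_submatrix_one_extensionCoeffs (n r : ℕ) (p : ℕ → ℕ → R) :
    ((fromCols ((1 : Matrix (Fin (n + r)) (Fin (n + r)) R).submatrix id (Fin.castAdd r))
      (extensionCoeffs n r p)).submatrix finSumFinEquiv id).det = (-1) ^ r := by
  have hblocks : (fromCols ((1 : Matrix (Fin (n + r)) (Fin (n + r)) R).submatrix id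
      (Fin.castAdd r)) (extensionCoeffs n r p)).submatrix finSumFinEquiv id =
      fromBlocks 1 ((extensionCoeffs n r p).submatrix (Fin.castAdd r) id) 0
        ((extensionCoeffs n r p).submatrix (Fin.natAdd n) id) := by
    ext (i | i) (j | j)
    · simp [one_apply]
    · rfl
    · show (1 : Matrix _ _ R) (Fin.natAdd n i) (Fin.castAdd r j) = 0
      exact one_apply_ne (Fin.ne_of_val_ne (by rw [Fin.val_natAdd, Fin.val_castAdd]; omega))
    · rfl
  rw [hblocks, det_fromBlocks_zero₂₁, det_one, one_mul, det_extensionCoeffs_submatrix_natAdd]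

theorem fromRows_mul_fromCols_extensionCoeffs {n r : ℕ} (A : Matrix (Fin n) (Fin n) R)
    (Ar : Matrix (Fin n) (Fin (n + r)) R) (p : ℕ → ℕ → R)
    (hA : ∀ (i j : Fin n), Ar i (Fin.castLE (Nat.le_add_right n r) j) = A i j)
    (hcol : ∀ (j : Fin r) (i : Fin n), Ar i ⟨n + j, Nat.add_lt_add_left j.isLt n⟩ =
      ∑ m : Fin (n + j), p m j * Ar i (Fin.castLE (Nat.add_le_add_left j.isLt.le n) m))
    (d : Fin r → Fin (n + r)) :
    fromRows Ar ((1 : Matrix (Fin (n + r)) (Fin (n + r)) R).submatrix d id) *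
      fromCols ((1 : Matrix (Fin (n + r)) (Fin (n + r)) R).submatrix id (Fin.castAdd r))
        (extensionCoeffs n r p) =
      fromBlocks A 0
        ((1 : Matrix (Fin (n + r)) (Fin (n + r)) R).submatrix d id *
          (1 : Matrix (Fin (n + r)) (Fin (n + r)) R).submatrix id (Fin.castAdd r))
        ((extensionCoeffs n r p).submatrix d id) := by
  rw [fromRows_mul_fromCols, mul_extensionCoeffs_eq_zero Ar p hcol]
  congr
  · ext i j
    rw [← hA, mul_apply]
    simp only [submatrix_apply, id_eq, one_apply, mul_ite, mul_one, mul_zero,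
      Finset.sum_ite_eq', Finset.mem_univ, if_true]
    rfl
  · ext i j
    simp [mul_apply, one_apply]

end

theorem n_determinant_minor_formula_general {R : Type*} [CommRing R] {n r : ℕ}
    (A : Matrix (Fin n) (Fin n) R) (Ar : Matrix (Fin n) (Fin (n + r)) R)
    (p : ℕ → ℕ → R)
    -- the first n columns of Ar form A
    (hA : ∀ (i j : Fin n), Ar i (Fin.castLE (Nat.le_add_right n r) j) = A i j)
    -- column n+j of Ar is the prescribed linear combination of the previous columns
    (hcol : ∀ (j : Fin r) (i : Fin n),
      Ar i ⟨n + (j : ℕ), Nat.add_lt_add_left j.isLt n⟩ =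
        ∑ m : Fin (n + (j : ℕ)), p (m : ℕ) (j : ℕ) *
          Ar i (Fin.castLE (Nat.add_le_add_left j.isLt.le n) m))
    -- c enumerates the kept columns, d the deleted columns j_1 < ... < j_r
    (c : Fin n → Fin (n + r)) (d : Fin r → Fin (n + r))
    (hc : StrictMono c) (hd : StrictMono d)
    (hdisj : ∀ (k : Fin n) (t : Fin r), c k ≠ d t) :
    Matrix.det (Matrix.of fun i k => Ar i (c k)) =
      (-1 : R) ^ (n * r + (∑ t : Fin r, ((d t : ℕ) + 1)) + r * (r - 1) / 2) *
        Matrix.det (Matrix.of fun s t : Fin r =>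
          if (d s : ℕ) < n + (t : ℕ) then p (d s : ℕ) (t : ℕ)
          else if (d s : ℕ) = n + (t : ℕ) then -1 else 0) *
        A.det := by
  set N := n * r + ∑ t, (d t : ℕ) + r.choose 2 + r
  set Q := (extensionCoeffs n r p).submatrix d id
  have hkey : A.det * Q.det = (-1) ^ N * det (of fun i k => Ar i (c k)) := by
    rw [← det_fromBlocks_zero₁₂, ← fromRows_mul_fromCols_extensionCoeffs A Ar p hA hcol d,
      ← submatrix_id_id (fromRows Ar _ * _), ← submatrix_mul_equiv _ _ id finSumFinEquiv id,
      det_mul, det_fromRows_submatrix_one Ar c d hc hd hdisj,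
      det_fromCols_submatrix_one_extensionCoeffs, pow_add]
    ring
  have hsign : n * r + ∑ t, ((d t : ℕ) + 1) + r * (r - 1) / 2 = N := by
    rw [Finset.sum_add_distrib, ← Nat.choose_two_right]
    simp only [Finset.sum_const, Finset.card_univ, Fintype.card_fin, smul_eq_mul, mul_one, N]
    ring
  change _ = _ * Q.det * _
  calc det (of fun i k => Ar i (c k))
      = ((-1) ^ N * (-1) ^ N) * det (of fun i k => Ar i (c k)) := by
        rw [← pow_add, Even.neg_one_pow ⟨N, rfl⟩, one_mul]
    _ = _ := by
        rw [hsign, mul_assoc, ← hkey]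
        ring

/-- Theorem 1 of the paper: an `n`-determinant connects `det A` with an arbitrary
minor of order `n` of the extended matrix `A_r = [A | A_{n+1} | ... | A_{n+r}]`. -/
theorem n_determinant_minor_formula {R : Type*} [CommRing R] {n r : ℕ}
    (A : Matrix (Fin n) (Fin n) R) (Ar : Matrix (Fin n) (Fin (n + r)) R)
    (p : ℕ → ℕ → R)
    -- the first n columns of Ar form A
    (hA : ∀ (i j : Fin n), Ar i (Fin.castLE (Nat.le_add_right n r) j) = A i j)
    -- column n+j of Ar is the prescribed linear combination of the previous columns
    (hcol : ∀ (j : Fin r) (i : Fin n),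
      Ar i ⟨n + (j : ℕ), Nat.add_lt_add_left j.isLt n⟩ =
        ∑ m : Fin (n + (j : ℕ)), p (m : ℕ) (j : ℕ) *
          Ar i (Fin.castLE (Nat.add_le_add_left j.isLt.le n) m))
    -- c enumerates the kept columns, d the deleted columns j_1 < ... < j_r
    (c : Fin n → Fin (n + r)) (d : Fin r → Fin (n + r))
    (hc : StrictMono c) (hd : StrictMono d)
    (hdisj : ∀ (k : Fin n) (t : Fin r), c k ≠ d t)
    -- the last column cannot be deleted
    (hlast : ∀ t : Fin r, (d t : ℕ) < n + r - 1) :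
    Matrix.det (Matrix.of fun i k => Ar i (c k)) =
      (-1 : R) ^ (n * r + (∑ t : Fin r, ((d t : ℕ) + 1)) + r * (r - 1) / 2) *
        Matrix.det (Matrix.of fun s t : Fin r =>
          if (d s : ℕ) < n + (t : ℕ) then p (d s : ℕ) (t : ℕ)
          else if (d s : ℕ) = n + (t : ℕ) then -1 else 0) *
        A.det :=
  n_determinant_minor_formula_general A Ar p hA hcol c d hc hd hdisj
end

section
/- Let (a_k) be a sequence in a commutative ring R with a_{1+r} = Σ_{i=1}^r p_{i,r} a_i for all r ≥ 1. Then a_{r+1} = a_1 · det(Q), where Q is the r×r upper Hessenberg matrix with Q_{i,j} = p_{i,j} for i ≤ j, Q_{i+1,i} = -1, and Q_{i,j} = 0 for i > j+1. -/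
/-!
Put `v = (a₁, …, a_r)` and let `Q` be the Hessenberg matrix. The recurrence says exactly that
`v Q = a_{r+1} e_r`: column `j < r` of `Q` reproduces the recurrence for `a_{j+2}` minus `a_{j+2}`
itself, while the last column has no `-1` and gives `a_{r+1}`. Multiplying on the right by
`adj Q` gives `det Q • v = a_{r+1} • (row r of adj Q)`, and the `(r, 1)` entry of `adj Q` is `1`:
deleting the first row and the last column of `Q` leaves an upper triangular matrix with `-1` on
the diagonal, whose determinant `(-1)^(r-1)` cancels the cofactor sign.
-/

open Matrix Finset

namespace Matrix

variable {n R : Type*} [Fintype n] [DecidableEq n] [CommRing R]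

theorem det_mul_eq_of_vecMul_eq_single {A : Matrix n n R} {v : n → R} {j : n} {c : R}
    (hv : v ᵥ* A = Pi.single j c) (i : n) : A.det * v i = c * A.adjugate j i := by
  have := congrFun (congrArg (· ᵥ* A.adjugate) hv) i
  simpa [vecMul_vecMul, mul_adjugate, single_vecMul, vecMul_smul, mul_comm] using this

end Matrix

def hessenberg {R : Type*} [CommRing R] (p : ℕ → ℕ → R) (r : ℕ) : Matrix (Fin r) (Fin r) R :=
  Matrix.of fun i j : Fin r =>
    if (i : ℕ) ≤ (j : ℕ) then p ((i : ℕ) + 1) ((j : ℕ) + 1)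
    else if (i : ℕ) = (j : ℕ) + 1 then -1 else 0

section hessenberg

variable {R : Type*} [CommRing R] (p : ℕ → ℕ → R)

theorem vecMul_hessenberg {a : ℕ → R}
    (h : ∀ r, 1 ≤ r → a (1 + r) = ∑ i ∈ Icc 1 r, p i r * a i) (m : ℕ) :
    (fun k : Fin (m + 1) => a (k + 1)) ᵥ* hessenberg p (m + 1) =
      Pi.single (Fin.last m) (a (m + 2)) := by
  have hrec (n : ℕ) : ∑ k ∈ range (n + 1), p (k + 1) (n + 1) * a (k + 1) = a (n + 2) := by
    rw [range_eq_Ico, sum_Ico_add' (fun i => p i (n + 1) * a i), Ico_add_one_right_eq_Icc,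
      zero_add, ← h (n + 1) (by omega)]
    ring_nf
  ext j
  have hterm (k : ℕ) :
      a (k + 1) * (if k ≤ j then p (k + 1) (j + 1) else if k = j + 1 then -1 else 0) =
        (if k ≤ j then p (k + 1) (j + 1) * a (k + 1) else 0) -
          if k = j + 1 then a (j + 2) else 0 := by
    split_ifs <;> first | omega | (subst_vars; ring)
  have hfilter : (range (m + 1)).filter (· ≤ (j : ℕ)) = range (j + 1) := by
    ext k; simp; omega
  calc ((fun k : Fin (m + 1) => a (k + 1)) ᵥ* hessenberg p (m + 1)) j
      = ∑ k ∈ range (m + 1), a (k + 1) *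
          (if k ≤ j then p (k + 1) (j + 1) else if k = j + 1 then -1 else 0) :=
        Fin.sum_univ_eq_sum_range (fun k => a (k + 1) *
          (if k ≤ j then p (k + 1) (j + 1) else if k = j + 1 then -1 else 0)) _
    _ = a (j + 2) - if (j : ℕ) + 1 ∈ range (m + 1) then a (j + 2) else 0 := by
        rw [sum_congr rfl fun k _ => hterm k, sum_sub_distrib, sum_ite_eq', ← sum_filter, hfilter,
          hrec]
    _ = (Pi.single (Fin.last m) (a (m + 2)) : Fin (m + 1) → R) j := by
        rcases (Fin.le_last j).eq_or_lt with rfl | hlt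
        · simp
        · have hjm : (j : ℕ) < m := hlt
          simp [hlt.ne, hjm]

theorem det_hessenberg_submatrix_succ_castSucc (m : ℕ) :
    ((hessenberg p (m + 1)).submatrix Fin.succ Fin.castSucc).det = (-1) ^ m := by
  have hupper : ((hessenberg p (m + 1)).submatrix Fin.succ Fin.castSucc).IsUpperTriangular := by
    intro i j (hji : j < i)
    have hji' : (j : ℕ) < i := hji
    simp only [submatrix_apply, hessenberg, of_apply, Fin.val_succ, Fin.val_castSucc]
    rw [if_neg (by omega), if_neg (by omega)]
  rw [det_of_isUpperTriangular hupper]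
  simp [hessenberg]

theorem adjugate_hessenberg_last_zero (m : ℕ) :
    (hessenberg p (m + 1)).adjugate (Fin.last m) 0 = 1 := by
  rw [adjugate_fin_succ_eq_det_submatrix, Fin.succAbove_zero, Fin.succAbove_last,
    det_hessenberg_submatrix_succ_castSucc]
  simp [← pow_add]

end hessenberg

/-- Proposition 2: if `a (1+r) = Σ_{i=1}^r p i r * a i` then `a (r+1) = a 1 * det Q`,
where `Q` is the associated `r × r` upper Hessenberg matrix. -/
theorem one_determinant_hessenberg {R : Type*} [CommRing R]
    (a : ℕ → R) (p : ℕ → ℕ → R)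
    (h : ∀ r : ℕ, 1 ≤ r → a (1 + r) = ∑ i ∈ Finset.Icc 1 r, p i r * a i)
    (r : ℕ) (hr : 1 ≤ r) :
    a (r + 1) = a 1 * Matrix.det (Matrix.of fun i j : Fin r =>
      if (i : ℕ) ≤ (j : ℕ) then p ((i : ℕ) + 1) ((j : ℕ) + 1)
      else if (i : ℕ) = (j : ℕ) + 1 then -1 else 0) := by
  obtain ⟨m, rfl⟩ : ∃ m, r = m + 1 := ⟨r - 1, by omega⟩
  have hcramer := det_mul_eq_of_vecMul_eq_single (vecMul_hessenberg p h m) 0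
  rw [adjugate_hessenberg_last_zero, mul_one] at hcramer
  rw [mul_comm]
  exact hcramer.symm
end

section
/- For every r ≥ 1, the r-th Catalan number C_r equals the determinant of the r×r upper Hessenberg matrix whose (i,j) entry is C_{j-i} for i ≤ j, is -1 for i = j+1, and 0 otherwise. -/
open Finset

/-- Auxiliary matrix: Hessenberg matrix of Catalan numbers where the last column
is shifted by `c`. -/
def catM (r c : ℕ) : Matrix (Fin r) (Fin r) ℤ :=
  Matrix.of fun i j =>
    if (j : ℕ) + 1 = r then (catalan (c + (r - 1 - (i : ℕ))) : ℤ)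
    else if (i : ℕ) ≤ (j : ℕ) then (catalan ((j : ℕ) - (i : ℕ)) : ℤ)
    else if (i : ℕ) = (j : ℕ) + 1 then -1 else 0

lemma val_succAbove {n : ℕ} (p : Fin (n + 1)) (k : Fin n) :
    ((p.succAbove k : Fin (n + 1)) : ℕ) = if (k : ℕ) < (p : ℕ) then (k : ℕ) else (k : ℕ) + 1 := by
  rcases lt_or_ge (k : ℕ) (p : ℕ) with h | h
  · rw [if_pos h, Fin.succAbove_of_castSucc_lt _ _ (by simpa [Fin.lt_def] using h),
      Fin.coe_castSucc]
  · rw [if_neg (not_lt.2 h), Fin.succAbove_of_le_castSucc _ _ (by simpa [Fin.le_def] using h),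
      Fin.val_succ]

lemma catM_det_rec (r c : ℕ) :
    (catM (r + 2) c).det =
      (catalan c : ℤ) * (catM (r + 1) 0).det + (catM (r + 1) (c + 1)).det := by
  rw [Matrix.det_succ_row _ (Fin.last (r + 1))]
  rw [Fin.sum_univ_castSucc, Fin.sum_univ_castSucc]
  have hsum0 : (∑ j : Fin r, (-1 : ℤ) ^ ((Fin.last (r+1) : ℕ) + (Fin.castSucc (Fin.castSucc j) : ℕ)) *
      (catM (r + 2) c) (Fin.last (r + 1)) (Fin.castSucc (Fin.castSucc j)) *
      ((catM (r + 2) c).submatrix (Fin.last (r+1)).succAbove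
        (Fin.castSucc (Fin.castSucc j)).succAbove).det) = 0 := by
    apply Finset.sum_eq_zero
    intro j _
    have hj := j.isLt
    have hz : (catM (r + 2) c) (Fin.last (r + 1)) (Fin.castSucc (Fin.castSucc j)) = 0 := by
      simp only [catM, Matrix.of_apply, Fin.coe_castSucc, Fin.val_last]
      rw [if_neg (by omega), if_neg (by omega), if_neg (by omega)]
    rw [hz]; ring
  rw [hsum0, zero_add]
  have hA : (catM (r + 2) c).submatrix (Fin.last (r+1)).succAbove
      (Fin.castSucc (Fin.last r)).succAbove = catM (r + 1) (c + 1) := by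
    ext i j
    have hi := i.isLt
    have hj := j.isLt
    simp only [Matrix.submatrix_apply, Fin.succAbove_last]
    have hcol : (((Fin.last r).castSucc : Fin (r+2)).succAbove j : ℕ) =
        if (j : ℕ) < r then (j : ℕ) else (j : ℕ) + 1 := by
      rw [val_succAbove]
      simp
    simp only [catM, Matrix.of_apply, Fin.coe_castSucc]
    rw [hcol]
    rcases lt_or_ge (j : ℕ) r with h | h
    · simp only [if_pos h]
      rw [if_neg (by omega : ¬((j:ℕ) + 1 = r + 2)), if_neg (by omega : ¬((j:ℕ) + 1 = r + 1))]
    · simp only [if_neg (not_lt.2 h)]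
      rw [if_pos (by omega : (j:ℕ) + 1 + 1 = r + 2), if_pos (by omega : (j:ℕ) + 1 = r + 1),
        show c + (r + 2 - 1 - (i:ℕ)) = c + 1 + (r + 1 - 1 - (i:ℕ)) from by omega]
  have hB : (catM (r + 2) c).submatrix (Fin.last (r+1)).succAbove
      (Fin.last (r+1)).succAbove = catM (r + 1) 0 := by
    ext i j
    have hi := i.isLt
    have hj := j.isLt
    simp only [Matrix.submatrix_apply, Fin.succAbove_last, catM, Matrix.of_apply,
      Fin.coe_castSucc]
    rw [if_neg (by omega : ¬((j:ℕ) + 1 = r + 2))]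
    rcases lt_or_ge (j : ℕ) r with h | h
    · rw [if_neg (by omega : ¬((j:ℕ) + 1 = r + 1))]
    · rw [if_pos (by omega : (j:ℕ) + 1 = r + 1), if_pos (by omega : (i:ℕ) ≤ (j:ℕ)),
        show ((j:ℕ) - (i:ℕ)) = 0 + (r + 1 - 1 - (i:ℕ)) from by omega]
  have e1 : (catM (r + 2) c) (Fin.last (r + 1)) (Fin.castSucc (Fin.last r)) = -1 := by
    simp only [catM, Matrix.of_apply, Fin.coe_castSucc, Fin.val_last]
    norm_num
  have e2 : (catM (r + 2) c) (Fin.last (r + 1)) (Fin.last (r + 1)) = (catalan c : ℤ) := by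
    simp only [catM, Matrix.of_apply, Fin.val_last]
    norm_num
  have hsign1 : (-1 : ℤ) ^ ((Fin.last (r+1) : ℕ) + (Fin.castSucc (Fin.last r) : ℕ)) =
      (-1) ^ (2 * r + 1) := by
    simp only [Fin.val_last, Fin.coe_castSucc]
    congr 1
    omega
  have hsign2 : (-1 : ℤ) ^ ((Fin.last (r+1) : ℕ) + (Fin.last (r+1) : ℕ)) =
      (-1) ^ (2 * (r + 1)) := by
    simp only [Fin.val_last]
    congr 1
    omega
  have hpow : ∀ m : ℕ, ((-1 : ℤ)) ^ (2 * m) = 1 := by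
    intro m
    rw [pow_mul]
    norm_num
  rw [e1, e2, hA, hB, hsign1, hsign2, pow_succ, hpow r, hpow (r + 1)]
  ring

lemma catM_det (r c : ℕ) :
    (catM (r + 1) c).det = ∑ k : Fin (r + 1), (catalan (c + k) : ℤ) * catalan (r - k) := by
  induction r generalizing c with
  | zero =>
    rw [Matrix.det_fin_one]
    simp [catM]
  | succ n ih =>
    rw [catM_det_rec, ih, ih]
    conv_rhs => rw [Fin.sum_univ_succ]
    have h3 : (∑ k : Fin (n + 1), (catalan (0 + (k : ℕ)) : ℤ) * catalan (n - k)) =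
        ((catalan (n + 1) : ℕ) : ℤ) := by
      rw [catalan_succ]
      push_cast
      exact Finset.sum_congr rfl fun k _ => by norm_num
    rw [h3]
    have hterm : ∀ k : Fin (n + 1), (catalan (c + ((Fin.succ k : Fin (n+2)) : ℕ)) : ℤ) *
        catalan (n + 1 - ((Fin.succ k : Fin (n+2)) : ℕ)) =
        (catalan (c + 1 + (k : ℕ)) : ℤ) * catalan (n - (k : ℕ)) := by
      intro k
      have hk : ((Fin.succ k : Fin (n+2)) : ℕ) = (k : ℕ) + 1 := rfl
      rw [hk, show c + ((k:ℕ) + 1) = c + 1 + (k:ℕ) from by ring,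
        show n + 1 - ((k:ℕ) + 1) = n - (k:ℕ) from by omega]
    rw [Finset.sum_congr rfl (fun k _ => hterm k)]
    have h0 : ((0 : Fin (n+2)) : ℕ) = 0 := rfl
    rw [h0]
    norm_num

/-- The `r`-th Catalan number as an upper Hessenberg determinant. -/
theorem catalan_hessenberg_det (r : ℕ) (hr : 1 ≤ r) :
    (catalan r : ℤ) = Matrix.det (Matrix.of fun i j : Fin r =>
      if (i : ℕ) ≤ (j : ℕ) then (catalan ((j : ℕ) - (i : ℕ)) : ℤ)
      else if (i : ℕ) = (j : ℕ) + 1 then -1 else 0) := by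
  obtain ⟨s, rfl⟩ : ∃ s, r = s + 1 := ⟨r - 1, by omega⟩
  have hM : (Matrix.of fun i j : Fin (s+1) =>
      if (i : ℕ) ≤ (j : ℕ) then (catalan ((j : ℕ) - (i : ℕ)) : ℤ)
      else if (i : ℕ) = (j : ℕ) + 1 then -1 else 0) = catM (s + 1) 0 := by
    ext i j
    have hi := i.isLt
    have hj := j.isLt
    simp only [catM, Matrix.of_apply]
    rcases eq_or_ne ((j : ℕ) + 1) (s + 1) with h | h
    · rw [if_pos h, if_pos (by omega : (i:ℕ) ≤ (j:ℕ)),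
        show ((j:ℕ) - (i:ℕ)) = 0 + (s + 1 - 1 - (i:ℕ)) from by omega]
    · rw [if_neg h]
  rw [hM, catM_det, catalan_succ]
  push_cast
  exact Finset.sum_congr rfl fun k _ => by norm_num
end

section
/- For every r ≥ 1, the r-th Bell number B_r equals the determinant of the r×r matrix whose (i,j) entry is the binomial coefficient C(j-1, i-1) for i ≤ j, is -1 for i = j+1, and 0 otherwise. -/
/-!
Let `Dₙ` be the determinant of the `n × n` upper Hessenberg matrix with entries `a i j` on and above
the diagonal and `-1` on the subdiagonal. Deleting row `i` and the last column of the
`(n+1) × (n+1)` matrix leaves the leading `i × i` block on top of rows carrying `-1` on the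
diagonal and zeros to its left, so peeling off the last row `n - i` times shows that this minor is
`(-1)^(n-i) Dᵢ`. Expansion along the last column then gives `Dₙ₊₁ = ∑_{i ≤ n} a i n * Dᵢ`, which
for `a i j = C(j, i)` is the Bell recurrence.
-/

open Finset

namespace Matrix

variable {R : Type*} [CommRing R]

def hessenberg (a : ℕ → ℕ → R) (n : ℕ) : Matrix (Fin n) (Fin n) R :=
  of fun i j => if (i : ℕ) ≤ j then a i j else if (i : ℕ) = j + 1 then -1 else 0

variable (a : ℕ → ℕ → R)

@[simp]
lemma hessenberg_castSucc_castSucc (n : ℕ) (i j : Fin n) :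
    hessenberg a (n + 1) i.castSucc j.castSucc = hessenberg a n i j := by
  simp [hessenberg]

lemma hessenberg_last_castSucc (n : ℕ) (j : Fin (n + 1)) :
    hessenberg a (n + 2) (Fin.last (n + 1)) j.castSucc = if j = Fin.last n then -1 else 0 := by
  have hj := j.isLt
  simp only [hessenberg, of_apply, Fin.val_last, Fin.val_castSucc, Fin.ext_iff]
  split_ifs <;> first | rfl | omega

lemma det_hessenberg_submatrix_succAbove_castSucc (n : ℕ) (i : Fin (n + 1)) :
    ((hessenberg a (n + 1)).submatrix i.succAbove Fin.castSucc).det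
      = (-1) ^ (n - i) * (hessenberg a i).det := by
  induction n with
  | zero =>
    obtain ⟨_ | k, hk⟩ := i
    · simp
    · omega
  | succ m ih =>
    induction i using Fin.lastCases with
    | last =>
      have hleading : (hessenberg a (m + 2)).submatrix Fin.castSucc Fin.castSucc
          = hessenberg a (m + 1) := by
        ext i j
        simp
      simp [hleading]
    | cast i =>
      set N := (hessenberg a (m + 2)).submatrix i.castSucc.succAbove Fin.castSucc
      have hrow (j : Fin (m + 1)) : N (Fin.last m) j = if j = Fin.last m then -1 else 0 := by
        simp only [N, submatrix_apply, Fin.succAbove_castSucc_of_le _ _ (Fin.le_last i),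
          Fin.succ_last, hessenberg_last_castSucc]
      have hminor : N.submatrix (Fin.last m).succAbove (Fin.last m).succAbove
          = (hessenberg a (m + 1)).submatrix i.succAbove Fin.castSucc := by
        ext k l
        simp [N]
      have hexp : m + 1 - i = m - i + 1 := by omega
      rw [det_succ_row N (Fin.last m), sum_eq_single (Fin.last m) (fun j _ hj => by simp [hrow, hj])
        (by simp), hrow, if_pos rfl, hminor, ih, Fin.val_castSucc, Fin.val_last, hexp,
        ← two_mul, pow_mul]
      simp [pow_succ]

lemma det_hessenberg_succ (n : ℕ) :
    (hessenberg a (n + 1)).det = ∑ i ∈ range (n + 1), a i n * (hessenberg a i).det := by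
  rw [det_succ_column _ (Fin.last n), ← Fin.sum_univ_eq_sum_range (fun i => a i n * _)]
  refine sum_congr rfl fun i _ => ?_
  have hsign : (-1 : R) ^ ((i : ℕ) + n) * (-1) ^ (n - i) = 1 := by
    rw [← pow_add, show (i : ℕ) + n + (n - i) = 2 * n by omega, pow_mul]
    simp
  have hentry : hessenberg a (n + 1) i (Fin.last n) = a i n := if_pos (Fin.is_le i)
  rw [Fin.succAbove_last, det_hessenberg_submatrix_succAbove_castSucc, Fin.val_last, hentry]
  linear_combination (a i n * (hessenberg a i).det) * hsign

lemma eq_det_hessenberg_of_recurrence {d : ℕ → R} (h0 : d 0 = 1)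
    (hsucc : ∀ n, d (n + 1) = ∑ i ∈ range (n + 1), a i n * d i) (n : ℕ) :
    d n = (hessenberg a n).det := by
  induction n using Nat.strong_induction_on with
  | _ n ih =>
    cases n with
    | zero => simp [h0]
    | succ n =>
      rw [hsucc, det_hessenberg_succ]
      exact sum_congr rfl fun i hi => by rw [ih i (by simpa using hi)]

end Matrix

theorem bell_hessenberg_det_general (B : ℕ → ℕ) (hB0 : B 0 = 1)
    (hBrec : ∀ r : ℕ, 1 ≤ r → B r = ∑ i ∈ Finset.range r, Nat.choose (r - 1) i * B i)
    (r : ℕ) :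
    (B r : ℤ) = Matrix.det (Matrix.of fun i j : Fin r =>
      if (i : ℕ) ≤ (j : ℕ) then (Nat.choose (j : ℕ) (i : ℕ) : ℤ)
      else if (i : ℕ) = (j : ℕ) + 1 then -1 else 0) :=
  Matrix.eq_det_hessenberg_of_recurrence (fun i j => (j.choose i : ℤ)) (d := fun n => (B n : ℤ))
    (by simp [hB0]) (fun n => by simp [hBrec (n + 1) (by omega)]) r

/-- The `r`-th Bell number as an upper Hessenberg determinant of binomial
coefficients, where the Bell numbers are characterized by their standard
recurrence `B r = Σ_{i<r} C(r-1, i) * B i`, `B 0 = 1`. -/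
theorem bell_hessenberg_det (B : ℕ → ℕ) (hB0 : B 0 = 1)
    (hBrec : ∀ r : ℕ, 1 ≤ r → B r = ∑ i ∈ Finset.range r, Nat.choose (r - 1) i * B i)
    (r : ℕ) (hr : 1 ≤ r) :
    (B r : ℤ) = Matrix.det (Matrix.of fun i j : Fin r =>
      if (i : ℕ) ≤ (j : ℕ) then (Nat.choose (j : ℕ) (i : ℕ) : ℤ)
      else if (i : ℕ) = (j : ℕ) + 1 then -1 else 0) :=
  bell_hessenberg_det_general B hB0 hBrec r
end

section
/- Let k ≥ 1 and r > 1. The determinant of the r×r matrix D with first row all 1's, with D_{i,j} = k+i-2 for 2 ≤ i ≤ j, D_{i+1,i} = -1, and 0 elsewhere, equals (k+r-1)!/k!. -/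
private def Mhes (k r : ℕ) : Matrix (Fin r) (Fin r) ℤ :=
  Matrix.of fun i j : Fin r =>
    if (i : ℕ) = (j : ℕ) + 1 then -1
    else if (i : ℕ) ≤ (j : ℕ) then
      (if (i : ℕ) = 0 then 1 else ((k : ℤ) + (i : ℕ) - 1))
    else 0

private lemma detMhes (k : ℕ) : ∀ n : ℕ,
    (Mhes k (n + 1)).det = ∏ i ∈ Finset.range n, ((k : ℤ) + i + 1) := by
  intro n
  induction n with
  | zero => simp [Mhes, Matrix.det_fin_one]
  | succ n ih =>
    rw [Matrix.det_succ_row (Mhes k (n + 2)) (Fin.last (n + 1))]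
    have hab : (Fin.castSucc (Fin.last n) : Fin (n+2)) ≠ Fin.last (n + 1) := by
      simp [Fin.ext_iff]
    rw [Finset.sum_eq_add (Fin.castSucc (Fin.last n)) (Fin.last (n + 1)) hab
      (fun c _ hc => by
        have h1 : (c : ℕ) ≠ n := fun h => hc.1 (Fin.ext (by simpa using h))
        have h2 : (c : ℕ) ≠ n + 1 := fun h => hc.2 (Fin.ext (by simpa using h))
        have hle : (c : ℕ) ≤ n + 1 := Nat.lt_succ_iff.mp c.isLt
        have : Mhes k (n + 2) (Fin.last (n + 1)) c = 0 := by
          simp only [Mhes, Matrix.of_apply, Fin.val_last]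
          rw [if_neg (by omega), if_neg (by omega)]
        rw [this]; ring)
      (by simp) (by simp)]
    have sub1 : (Mhes k (n + 2)).submatrix (Fin.last (n + 1)).succAbove
        (Fin.last (n + 1)).succAbove = Mhes k (n + 1) := by
      ext i j
      simp [Mhes, Fin.succAbove_last]
    have sub2 : (Mhes k (n + 2)).submatrix (Fin.last (n + 1)).succAbove
        ((Fin.castSucc (Fin.last n) : Fin (n+2)).succAbove) = Mhes k (n + 1) := by
      ext i j
      set c := ((Fin.castSucc (Fin.last n) : Fin (n+2)).succAbove) j with hcdef
      have hc : (c : ℕ) = if (j : ℕ) < n then (j : ℕ) else (j : ℕ) + 1 := by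
        rw [hcdef, Fin.succAbove]
        split_ifs with h h' h'
        · rfl
        · exact absurd (by simpa [Fin.lt_def] using h) h'
        · exact absurd (by simpa [Fin.lt_def] using h') h
        · rfl
      have hj : (j : ℕ) ≤ n := Nat.lt_succ_iff.mp j.isLt
      simp only [Mhes, Matrix.submatrix_apply, Matrix.of_apply, Fin.succAbove_last,
        Fin.coe_castSucc]
      rcases lt_or_ge (j : ℕ) n with h | h
      · rw [if_pos h] at hc
        rw [hc]
      · have hjn : (j : ℕ) = n := le_antisymm hj h
        rw [if_neg (by omega)] at hc
        rw [hc]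
        have hi : (i : ℕ) ≤ n := Nat.lt_succ_iff.mp i.isLt
        split_ifs <;> first | rfl | omega
    rw [sub1, sub2, ih]
    have e1 : Mhes k (n + 2) (Fin.last (n + 1)) (Fin.castSucc (Fin.last n)) = -1 := by
      simp [Mhes]
    have e2 : Mhes k (n + 2) (Fin.last (n + 1)) (Fin.last (n + 1)) = (k : ℤ) + n := by
      simp only [Mhes, Matrix.of_apply, Fin.val_last]
      rw [if_neg (by omega), if_pos le_rfl, if_neg (by omega)]
      push_cast; ring
    rw [e1, e2, Finset.prod_range_succ]
    simp only [Fin.val_last, Fin.coe_castSucc]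
    rw [show (n + 1 + n : ℕ) = 2 * n + 1 by ring, show (n + 1 + (n + 1) : ℕ) = 2 * (n + 1) by ring,
      pow_succ, pow_mul, pow_mul]
    push_cast
    ring

private lemma fact_prod (k : ℕ) : ∀ n : ℕ,
    Nat.factorial (k + n) = Nat.factorial k * ∏ i ∈ Finset.range n, (k + i + 1) := by
  intro n
  induction n with
  | zero => simp
  | succ n ih =>
    rw [Finset.prod_range_succ, show k + (n + 1) = (k + n) + 1 by ring, Nat.factorial_succ, ih]
    ring

/-- Factorials as a Hessenberg determinant: the determinant of the `r × r`
upper Hessenberg matrix with first row all 1's, rows `i ≥ 2` (1-based) equal to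
`k + i - 2` on and above the diagonal, subdiagonal `-1`, equals `(k+r-1)!/k!`. -/
theorem factorial_hessenberg_det (k r : ℕ) (hk : 1 ≤ k) (hr : 1 < r) :
    Matrix.det (Matrix.of fun i j : Fin r =>
      if (i : ℕ) = (j : ℕ) + 1 then -1
      else if (i : ℕ) ≤ (j : ℕ) then
        (if (i : ℕ) = 0 then 1 else ((k : ℤ) + (i : ℕ) - 1))
      else 0) =
    ((Nat.factorial (k + r - 1) / Nat.factorial k : ℕ) : ℤ) := by
  obtain ⟨n, rfl⟩ : ∃ n, r = n + 1 := ⟨r - 1, by omega⟩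
  have hdet := detMhes k n
  have hfac : Nat.factorial (k + (n + 1) - 1) / Nat.factorial k
      = ∏ i ∈ Finset.range n, (k + i + 1) := by
    rw [show k + (n + 1) - 1 = k + n by omega, fact_prod k n,
      Nat.mul_div_cancel_left _ (Nat.factorial_pos k)]
  show (Mhes k (n + 1)).det = _
  rw [hdet, hfac]
  push_cast
  rfl
end

section
/- Let Q_r be the r×r matrix with q_{ij} = 2 if i = j, q_{ij} = 1 if i < j, q_{ij} = -1 if i = j+1, and 0 otherwise. Then det(Q_r) = F_{2r+1}, the Fibonacci number with odd index 2r+1. -/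
/-!
Expand `Q_{r+2}` along its first column, whose only nonzero entries are `2` and `-1` on top.
Since the entries of `Q` depend only on `j - i`, the two minors are `Q_{r+1}` and `E_r`, the
matrix `Q_{r+1}` with its first row replaced by ones; expanding `E_{r+1}` the same way gives
`det Q_{r+2} = 2 det Q_{r+1} + det E_r` and `det E_{r+1} = det Q_{r+1} + det E_r`.
These are the recursions of `(F_{2r+3}, F_{2r+2})`.
-/

open Matrix

namespace Matrix

variable {α R : Type*} [CommRing R] {n : ℕ}

theorem submatrix_succAbove_one_succ (A : Matrix (Fin (n + 2)) (Fin (n + 2)) α) :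
    A.submatrix (Fin.succAbove 1) Fin.succ =
      (A.submatrix Fin.succ Fin.succ).updateRow 0 fun j => A 0 j.succ := by
  ext i j
  cases i using Fin.cases <;> simp [updateRow_apply]

theorem det_eq_of_col_zero_eq_zero_below_one (A : Matrix (Fin (n + 2)) (Fin (n + 2)) R)
    (hA : ∀ i : Fin n, A i.succ.succ 0 = 0) :
    A.det = A 0 0 * (A.submatrix Fin.succ Fin.succ).det -
      A 1 0 * ((A.submatrix Fin.succ Fin.succ).updateRow 0 fun j => A 0 j.succ).det := by
  rw [det_succ_column_zero, Fin.sum_univ_succ, Fin.sum_univ_succ, ← submatrix_succAbove_one_succ]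
  simp [hA, sub_eq_add_neg]

end Matrix

def qEntry (i j : ℕ) : ℤ :=
  if i = j then 2 else if i < j then 1 else if i = j + 1 then -1 else 0

theorem qEntry_succ_succ (i j : ℕ) : qEntry (i + 1) (j + 1) = qEntry i j := by
  simp [qEntry]

def fibQ (r : ℕ) : Matrix (Fin r) (Fin r) ℤ :=
  of fun i j => qEntry i j

def fibE (r : ℕ) : Matrix (Fin (r + 1)) (Fin (r + 1)) ℤ :=
  (fibQ (r + 1)).updateRow 0 fun _ => 1

theorem fibQ_submatrix_succ (r : ℕ) : (fibQ (r + 1)).submatrix Fin.succ Fin.succ = fibQ r := by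
  ext i j
  simp [fibQ, qEntry_succ_succ]

theorem fibE_submatrix_succ (r : ℕ) :
    (fibE (r + 1)).submatrix Fin.succ Fin.succ = fibQ (r + 1) := by
  ext i j
  simp [fibE, ← fibQ_submatrix_succ (r + 1)]

theorem det_fibQ_succ_succ (r : ℕ) :
    (fibQ (r + 2)).det = 2 * (fibQ (r + 1)).det + (fibE r).det := by
  have hE : ((fibQ (r + 1)).updateRow 0 fun j => fibQ (r + 2) 0 j.succ) = fibE r := by
    simp [fibE, fibQ, qEntry]
  have h00 : fibQ (r + 2) 0 0 = 2 := by simp [fibQ, qEntry]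
  have h10 : fibQ (r + 2) 1 0 = -1 := by simp [fibQ, qEntry]
  rw [det_eq_of_col_zero_eq_zero_below_one _ fun i => by simp [fibQ, qEntry],
    fibQ_submatrix_succ, hE, h00, h10]
  ring

theorem det_fibE_succ (r : ℕ) : (fibE (r + 1)).det = (fibQ (r + 1)).det + (fibE r).det := by
  have hE : ((fibQ (r + 1)).updateRow 0 fun j => fibE (r + 1) 0 j.succ) = fibE r := by
    simp [fibE]
  have h00 : fibE (r + 1) 0 0 = 1 := by simp [fibE]
  have h10 : fibE (r + 1) 1 0 = -1 := by simp [fibE, fibQ, qEntry]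
  rw [det_eq_of_col_zero_eq_zero_below_one _ fun i => by simp [fibE, fibQ, qEntry],
    fibE_submatrix_succ, hE, h00, h10]
  ring

theorem det_fibQ_succ_and_det_fibE (r : ℕ) :
    (fibQ (r + 1)).det = Nat.fib (2 * r + 3) ∧ (fibE r).det = Nat.fib (2 * r + 2) := by
  induction r with
  | zero => simp [fibQ, fibE, qEntry, Nat.fib_add_two]
  | succ r ih =>
    have h4 : Nat.fib (2 * r + 4) = Nat.fib (2 * r + 2) + Nat.fib (2 * r + 3) := Nat.fib_add_two
    have h5 : Nat.fib (2 * r + 5) = Nat.fib (2 * r + 3) + Nat.fib (2 * r + 4) := Nat.fib_add_two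
    rw [det_fibQ_succ_succ, det_fibE_succ, ih.1, ih.2, show 2 * (r + 1) + 3 = 2 * r + 5 by ring,
      show 2 * (r + 1) + 2 = 2 * r + 4 by ring]
    omega

/-- The odd-indexed Fibonacci number `F_{2r+1}` as the determinant of the matrix
`Q_r` with `2` on the diagonal, `1` above it, `-1` on the subdiagonal and `0`
elsewhere. -/
theorem fib_odd_index_det (r : ℕ) :
    Matrix.det (Matrix.of fun i j : Fin r =>
      if (i : ℕ) = (j : ℕ) then 2
      else if (i : ℕ) < (j : ℕ) then 1
      else if (i : ℕ) = (j : ℕ) + 1 then -1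
      else (0 : ℤ)) = (Nat.fib (2 * r + 1) : ℤ) := by
  cases r with
  | zero => simp
  | succ r => exact (det_fibQ_succ_and_det_fibE r).1
end

section
/- Let Q_r be the r×r matrix with q_{ij} = j - i + 1 for i ≤ j, q_{ij} = -1 for i = j+1, and 0 otherwise. Then det(Q_r) = F_{2r}, the Fibonacci number with even index 2r. -/
/-!
Expanding along the first column, which is `(1, -1, 0, …, 0)`, the minor at the entry `-1` is
`Q_{r-1}` with its first row replaced by the tail of the first row of `Q_r`, that is by the first
row of `Q_{r-1}` plus ones. By linearity of the determinant in that row, `q_r = det Q_r` and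
`c_r = det C_r`, where `C_r` is `Q_r` with first row all ones, satisfy
`q_{r+1} = 2 q_r + c_r` and `c_{r+1} = q_r + c_r`: the recursion of `(F_{2r+2}, F_{2r+1})`.
-/

open Matrix

theorem Matrix.det_succ_succ_of_column_zero_eq_zero {R : Type*} [CommRing R] {n : ℕ}
    (A : Matrix (Fin (n + 2)) (Fin (n + 2)) R) (hA : ∀ i : Fin n, A i.succ.succ 0 = 0) :
    A.det = A 0 0 * (A.submatrix Fin.succ Fin.succ).det
      - A 1 0 * (A.submatrix (Fin.succAbove 1) Fin.succ).det := by
  rw [det_succ_column_zero, Fin.sum_univ_succ, Fin.sum_univ_succ]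
  simp [hA, sub_eq_add_neg]

def qMatrix (n : ℕ) : Matrix (Fin n) (Fin n) ℤ :=
  Matrix.of fun i j =>
    if (i : ℕ) ≤ (j : ℕ) then (((j : ℕ) - (i : ℕ) + 1 : ℕ) : ℤ)
    else if (i : ℕ) = (j : ℕ) + 1 then -1
    else 0

theorem qMatrix_submatrix_succ (n : ℕ) :
    (qMatrix (n + 1)).submatrix Fin.succ Fin.succ = qMatrix n := by
  ext i j
  simp [qMatrix]

theorem qMatrix_updateRow_zero_submatrix_succAbove_one (n : ℕ) (v : Fin (n + 2) → ℤ) :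
    ((qMatrix (n + 2)).updateRow 0 v).submatrix (Fin.succAbove 1) Fin.succ
      = (qMatrix (n + 1)).updateRow 0 (v ∘ Fin.succ) := by
  ext i j
  cases i using Fin.cases with
  | zero => simp [Fin.succAbove]
  | succ i => simp [qMatrix, Fin.succAbove, Fin.succ_ne_zero]

theorem det_qMatrix_updateRow_zero (n : ℕ) (v : Fin (n + 2) → ℤ) :
    ((qMatrix (n + 2)).updateRow 0 v).det
      = v 0 * (qMatrix (n + 1)).det + ((qMatrix (n + 1)).updateRow 0 (v ∘ Fin.succ)).det := by
  rw [det_succ_succ_of_column_zero_eq_zero _ fun i => by simp [qMatrix, Fin.succ_ne_zero],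
    ← Fin.succAbove_zero, submatrix_updateRow_succAbove, Fin.succAbove_zero,
    qMatrix_submatrix_succ, qMatrix_updateRow_zero_submatrix_succAbove_one]
  simp [qMatrix]

theorem det_qMatrix_succ_succ (n : ℕ) :
    (qMatrix (n + 2)).det
      = 2 * (qMatrix (n + 1)).det + ((qMatrix (n + 1)).updateRow 0 1).det := by
  have hrow : qMatrix (n + 2) 0 ∘ Fin.succ = qMatrix (n + 1) 0 + 1 := by
    ext j
    simp [qMatrix]
  conv_lhs => rw [← updateRow_eq_self (qMatrix (n + 2)) 0]
  rw [det_qMatrix_updateRow_zero, hrow, det_updateRow_add, updateRow_eq_self]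
  simp [qMatrix]
  ring

theorem det_qMatrix_updateRow_one_succ (n : ℕ) :
    ((qMatrix (n + 2)).updateRow 0 1).det
      = (qMatrix (n + 1)).det + ((qMatrix (n + 1)).updateRow 0 1).det := by
  rw [det_qMatrix_updateRow_zero]
  simp

theorem det_qMatrix_succ_and_updateRow_one (n : ℕ) :
    (qMatrix (n + 1)).det = Nat.fib (2 * n + 2) ∧
      ((qMatrix (n + 1)).updateRow 0 1).det = Nat.fib (2 * n + 1) := by
  induction n with
  | zero => simp [qMatrix]
  | succ n ih =>
    have h3 : Nat.fib (2 * n + 3) = Nat.fib (2 * n + 1) + Nat.fib (2 * n + 2) := Nat.fib_add_two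
    have h4 : Nat.fib (2 * n + 4) = Nat.fib (2 * n + 2) + Nat.fib (2 * n + 3) := Nat.fib_add_two
    rw [det_qMatrix_succ_succ, det_qMatrix_updateRow_one_succ, ih.1, ih.2,
      show 2 * (n + 1) + 2 = 2 * n + 4 by ring, show 2 * (n + 1) + 1 = 2 * n + 3 by ring, h4, h3]
    push_cast
    constructor <;> ring

/-- The even-indexed Fibonacci number `F_{2r}` as the determinant of the matrix
`Q_r` with `q_{ij} = j - i + 1` for `i ≤ j` (1-based), `-1` on the subdiagonal
and `0` elsewhere. -/
theorem fib_even_index_det (r : ℕ) (hr : 1 ≤ r) :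
    Matrix.det (Matrix.of fun i j : Fin r =>
      if (i : ℕ) ≤ (j : ℕ) then (((j : ℕ) - (i : ℕ) + 1 : ℕ) : ℤ)
      else if (i : ℕ) = (j : ℕ) + 1 then -1
      else 0) = (Nat.fib (2 * r) : ℤ) := by
  obtain ⟨n, rfl⟩ := Nat.exists_eq_add_of_le' hr
  exact (det_qMatrix_succ_and_updateRow_one n).1
end

section
/- Let (b_i)_{i≥1} and (c_i)_{i≥2} be sequences in a commutative ring, and let (a^{(1)}_k) and (a^{(2)}_k) be two sequences both satisfying a_r = b_{r-2} a_{r-2} + c_{r-1} a_{r-1} for r > 2 (with possibly different initial conditions). Define d_1 = 1, d_2 = c_{k+2}, d_i = b_{k+i-1} d_{i-2} + c_{k+i} d_{i-1} for i > 2. Then for 0 ≤ k < r: det [[a^{(1)}_{k+1}, a^{(1)}_{r+2}],[a^{(2)}_{k+1}, a^{(2)}_{r+2}]] = (-1)^k b_1⋯b_k · d_{r-k+1} · det [[a^{(1)}_1, a^{(1)}_2],[a^{(2)}_1, a^{(2)}_2]]. -/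
/-- Proposition 3 (2-determinants): for two sequences satisfying the same
second-order recurrence `a r = b (r-2) * a (r-2) + c (r-1) * a (r-1)`, the
cross determinant reduces to the initial one, via the Hessenberg sequence `d`. -/
theorem two_determinant_identity {R : Type*} [CommRing R]
    (b c : ℕ → R) (a₁ a₂ : ℕ → R)
    (h₁ : ∀ r : ℕ, 2 < r → a₁ r = b (r - 2) * a₁ (r - 2) + c (r - 1) * a₁ (r - 1))
    (h₂ : ∀ r : ℕ, 2 < r → a₂ r = b (r - 2) * a₂ (r - 2) + c (r - 1) * a₂ (r - 1))
    (k r : ℕ) (hkr : k < r)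
    (d : ℕ → R) (hd1 : d 1 = 1) (hd2 : d 2 = c (k + 2))
    (hdrec : ∀ i : ℕ, 2 < i → d i = b (k + i - 1) * d (i - 2) + c (k + i) * d (i - 1)) :
    Matrix.det !![a₁ (k + 1), a₁ (r + 2); a₂ (k + 1), a₂ (r + 2)] =
      (-1 : R) ^ k * (∏ i ∈ Finset.Icc 1 k, b i) * d (r - k + 1) *
        Matrix.det !![a₁ 1, a₁ 2; a₂ 1, a₂ 2] := by
  simp only [Matrix.det_fin_two_of]
  -- base: Casoratian-type identity
  have base : ∀ m : ℕ, a₁ (m + 1) * a₂ (m + 2) - a₁ (m + 2) * a₂ (m + 1) =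
      (-1 : R) ^ m * (∏ i ∈ Finset.Icc 1 m, b i) * (a₁ 1 * a₂ 2 - a₁ 2 * a₂ 1) := by
    intro m
    induction m with
    | zero => simp
    | succ n ih =>
      have e1 := h₁ (n + 3) (by omega)
      have e2 := h₂ (n + 3) (by omega)
      simp only [show n + 3 - 2 = n + 1 by omega, show n + 3 - 1 = n + 2 by omega] at e1 e2
      rw [Finset.prod_Icc_succ_top (by omega)]
      have hx : n + 1 + 1 = n + 2 := by omega
      have hy : n + 1 + 2 = n + 3 := by omega
      rw [hx, hy, e1, e2]
      linear_combination (-(b (n + 1))) * ih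
  have key : ∀ j : ℕ, 1 ≤ j →
      a₁ (k + 1) * a₂ (k + 1 + j) - a₁ (k + 1 + j) * a₂ (k + 1) =
      (-1 : R) ^ k * (∏ i ∈ Finset.Icc 1 k, b i) * d j * (a₁ 1 * a₂ 2 - a₁ 2 * a₂ 1) := by
    intro j
    induction j using Nat.strong_induction_on with
    | _ j ih =>
      rcases j with _ | _ | _ | m
      · omega
      · intro _
        rw [hd1, show k + 1 + 1 = k + 2 by omega]
        linear_combination base k
      · intro _
        have e1 := h₁ (k + 3) (by omega)
        have e2 := h₂ (k + 3) (by omega)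
        simp only [show k + 3 - 2 = k + 1 by omega, show k + 3 - 1 = k + 2 by omega] at e1 e2
        rw [hd2, show k + 1 + 2 = k + 3 by omega, e1, e2]
        linear_combination c (k + 2) * base k
      · intro _
        have e1 := h₁ (k + (m + 4)) (by omega)
        have e2 := h₂ (k + (m + 4)) (by omega)
        simp only [show k + (m + 4) - 2 = k + (m + 2) by omega,
          show k + (m + 4) - 1 = k + (m + 3) by omega] at e1 e2
        have ih1 := ih (m + 1) (by omega) (by omega)
        have ih2 := ih (m + 2) (by omega) (by omega)
        rw [show k + 1 + (m + 1) = k + (m + 2) by omega] at ih1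
        rw [show k + 1 + (m + 2) = k + (m + 3) by omega] at ih2
        have hdr := hdrec (m + 3) (by omega)
        simp only [show m + 3 - 2 = m + 1 by omega, show m + 3 - 1 = m + 2 by omega,
          show k + (m + 3) - 1 = k + (m + 2) by omega] at hdr
        rw [show k + 1 + (m + 3) = k + (m + 4) by omega, e1, e2, hdr]
        linear_combination b (k + (m + 2)) * ih1 + c (k + (m + 3)) * ih2
  have h := key (r - k + 1) (by omega)
  rw [show k + 1 + (r - k + 1) = r + 2 by omega] at h
  exact h
end

section
/- For all nonnegative integers u, v, k, r with k ≤ r: F_{u+k}(x) F_{v+r}(x) - F_{u+r}(x) F_{v+k}(x) = (-1)^k F_{r-k}(x) · (F_u(x) F_{v+1}(x) - F_{u+1}(x) F_v(x)), where F_n(x) are the Fibonacci polynomials. -/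
open Polynomial

/-- Fibonacci polynomials: `F 0 = 0`, `F 1 = 1`, `F (n+2) = X * F (n+1) + F n`. -/
noncomputable def fibPoly : ℕ → Polynomial ℤ
  | 0 => 0
  | 1 => 1
  | (n + 2) => X * fibPoly (n + 1) + fibPoly n

lemma fibPoly_rec (n : ℕ) : fibPoly (n + 2) = X * fibPoly (n + 1) + fibPoly n := rfl

lemma fibPoly_main0 (d : ℕ) : ∀ u v : ℕ,
    fibPoly u * fibPoly (v + d) - fibPoly (u + d) * fibPoly v =
      fibPoly d * (fibPoly u * fibPoly (v + 1) - fibPoly (u + 1) * fibPoly v) := by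
  induction d using Nat.strong_induction_on with
  | _ d ih =>
    match d with
    | 0 => intro u v; simp [fibPoly]
    | 1 => intro u v; simp [fibPoly]
    | n + 2 =>
      intro u v
      have h1 := ih (n + 1) (by omega) u v
      have h0 := ih n (by omega) u v
      have e1 : v + (n + 2) = (v + n) + 2 := by ring
      have e2 : u + (n + 2) = (u + n) + 2 := by ring
      have e3 : v + (n + 1) = (v + n) + 1 := by ring
      have e4 : u + (n + 1) = (u + n) + 1 := by ring
      rw [e1, e2, fibPoly_rec (v + n), fibPoly_rec (u + n), fibPoly_rec n]
      rw [e3, e4] at h1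
      ring_nf
      ring_nf at h1 h0
      linear_combination X * h1 + h0

lemma fibPoly_shift (k : ℕ) : ∀ u v : ℕ,
    fibPoly (u + k) * fibPoly (v + k + 1) - fibPoly (u + k + 1) * fibPoly (v + k) =
      (-1 : Polynomial ℤ) ^ k * (fibPoly u * fibPoly (v + 1) - fibPoly (u + 1) * fibPoly v) := by
  induction k with
  | zero => intro u v; simp
  | succ n ih =>
    intro u v
    have h := ih (u + 1) (v + 1)
    have e1 : u + 1 + n = u + (n + 1) := by ring
    have e2 : v + 1 + n = v + (n + 1) := by ring
    rw [e1, e2] at h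
    rw [h]
    rw [fibPoly_rec u, fibPoly_rec v]
    ring

/-- Identity (10) of the paper for Fibonacci polynomials. -/
theorem fibPoly_cross_identity (u v k r : ℕ) (hkr : k ≤ r) :
    fibPoly (u + k) * fibPoly (v + r) - fibPoly (u + r) * fibPoly (v + k) =
      (-1 : Polynomial ℤ) ^ k * fibPoly (r - k) *
        (fibPoly u * fibPoly (v + 1) - fibPoly (u + 1) * fibPoly v) := by
  obtain ⟨d, rfl⟩ := Nat.exists_eq_add_of_le hkr
  have e : k + d - k = d := by omega
  rw [e]
  have h1 := fibPoly_main0 d (u + k) (v + k)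
  have e1 : v + k + d = v + (k + d) := by ring
  have e2 : u + k + d = u + (k + d) := by ring
  rw [e1, e2] at h1
  rw [h1, fibPoly_shift k u v]
  ring
end

section
/- Index reduction formula for Fibonacci polynomials: for integers u, v, k, r, t with all indices nonnegative, det [[F_{u+k-t}(x), F_{u+r-t}(x)],[F_{v+k-t}(x), F_{v+r-t}(x)]] = (-1)^t · det [[F_{u+k}(x), F_{u+r}(x)],[F_{v+k}(x), F_{v+r}(x)]]. -/
open Polynomial

lemma fibPoly_add (m : ℕ) : ∀ a : ℕ, fibPoly (a + m + 1) =
    fibPoly (m + 1) * fibPoly (a + 1) + fibPoly m * fibPoly a := by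
  induction m using Nat.twoStepInduction with
  | zero => intro a; simp [fibPoly]
  | one => intro a; show fibPoly (a + 2) = _; simp [fibPoly]
  | more m ih1 ih2 =>
    intro a
    have : a + (m + 2) + 1 = (a + m + 1) + 2 := by ring
    rw [this, show fibPoly ((a + m + 1) + 2) = X * fibPoly (a + m + 1 + 1) + fibPoly (a + m + 1) from rfl]
    have e1 : a + m + 1 + 1 = a + (m + 1) + 1 := by ring
    rw [e1, ih2, ih1]
    rw [show fibPoly (m + 2 + 1) = X * fibPoly (m + 2) + fibPoly (m + 1) from rfl,
        show fibPoly (m + 2) = X * fibPoly (m + 1) + fibPoly m from rfl]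
    ring

lemma fibPoly_step (a c m : ℕ) :
    fibPoly a * fibPoly (c + m) - fibPoly (a + m) * fibPoly c =
      -(fibPoly (a + 1) * fibPoly (c + m + 1) - fibPoly (a + m + 1) * fibPoly (c + 1)) := by
  cases m with
  | zero => simp
  | succ s =>
    have h1 : fibPoly (c + (s + 1)) = fibPoly (s + 1) * fibPoly (c + 1) + fibPoly s * fibPoly c := by
      have := fibPoly_add s c; rw [show c + (s+1) = c + s + 1 by ring, this]
    have h2 : fibPoly (a + (s + 1)) = fibPoly (s + 1) * fibPoly (a + 1) + fibPoly s * fibPoly a := by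
      have := fibPoly_add s a; rw [show a + (s+1) = a + s + 1 by ring, this]
    have h3 : fibPoly (c + (s + 1) + 1) = fibPoly (s + 1) * fibPoly (c + 2) + fibPoly s * fibPoly (c + 1) := by
      have := fibPoly_add s (c + 1); rw [show c + (s+1) + 1 = (c+1) + s + 1 by ring, this]
    have h4 : fibPoly (a + (s + 1) + 1) = fibPoly (s + 1) * fibPoly (a + 2) + fibPoly s * fibPoly (a + 1) := by
      have := fibPoly_add s (a + 1); rw [show a + (s+1) + 1 = (a+1) + s + 1 by ring, this]
    rw [h1, h2, h3, h4,
        show fibPoly (a + 2) = X * fibPoly (a + 1) + fibPoly a from rfl,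
        show fibPoly (c + 2) = X * fibPoly (c + 1) + fibPoly c from rfl]
    ring

/-- The index reduction formula for Fibonacci polynomials. -/
theorem fibPoly_index_reduction (u v k r t : ℕ) (hkr : k ≤ r)
    (htu : t ≤ u + k) (htv : t ≤ v + k) :
    Matrix.det !![fibPoly (u + k - t), fibPoly (u + r - t);
                  fibPoly (v + k - t), fibPoly (v + r - t)] =
      (-1 : Polynomial ℤ) ^ t *
        Matrix.det !![fibPoly (u + k), fibPoly (u + r);
                      fibPoly (v + k), fibPoly (v + r)] := by
  induction t with
  | zero => simp
  | succ t ih =>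
    have h1 : t ≤ u + k := by omega
    have h2 : t ≤ v + k := by omega
    have ih' := ih h1 h2
    set a := u + k - (t + 1) with ha
    set c := v + k - (t + 1) with hc
    have m := r - k
    have e1 : u + k - t = a + 1 := by omega
    have e2 : u + r - (t + 1) = a + (r - k) := by omega
    have e3 : u + r - t = a + (r - k) + 1 := by omega
    have e4 : v + k - t = c + 1 := by omega
    have e5 : v + r - (t + 1) = c + (r - k) := by omega
    have e6 : v + r - t = c + (r - k) + 1 := by omega
    rw [e1, e3, e4, e6] at ih'
    rw [e2, e5]
    simp only [Matrix.det_fin_two_of] at ih' ⊢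
    rw [fibPoly_step a c (r - k), ih']
    ring
end

section
/- For Chebyshev polynomials of the second kind and integers 0 ≤ k < r and u, v ≥ 0: U_{u+k}(x) U_{v+r}(x) - U_{u+r}(x) U_{v+k}(x) = U_{r-k-1}(x) · (U_u(x) U_{v+1}(x) - U_{u+1}(x) U_v(x)). -/
open Polynomial Polynomial.Chebyshev

private lemma cheb_shift (u v : ℤ) : ∀ k : ℕ,
    U ℤ (u + k) * U ℤ (v + k + 1) - U ℤ (u + k + 1) * U ℤ (v + k) =
      U ℤ u * U ℤ (v + 1) - U ℤ (u + 1) * U ℤ v := by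
  intro k
  induction k with
  | zero => simp
  | succ n ih =>
    have h1 := U_add_two ℤ (u + n)
    have h2 := U_add_two ℤ (v + n)
    push_cast
    push_cast at ih
    linear_combination (norm := ring_nf) (U ℤ (u + n + 1)) * h2 - (U ℤ (v + n + 1)) * h1 + ih

private lemma cheb_cross (u v : ℤ) : ∀ d : ℕ,
    U ℤ u * U ℤ (v + d + 1) - U ℤ (u + d + 1) * U ℤ v =
      U ℤ d * (U ℤ u * U ℤ (v + 1) - U ℤ (u + 1) * U ℤ v) := by
  intro d
  induction d using Nat.twoStepInduction with
  | zero => simp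
  | one =>
    have h1 := U_add_two ℤ u
    have h2 := U_add_two ℤ v
    have h3 := U_one ℤ
    push_cast
    linear_combination (norm := ring_nf) (U ℤ u) * h2 - (U ℤ v) * h1
      - (U ℤ u * U ℤ (v + 1) - U ℤ (u + 1) * U ℤ v) * h3
  | more d ih1 ih2 =>
    have h1 := U_add_two ℤ (u + d + 1)
    have h2 := U_add_two ℤ (v + d + 1)
    have h3 := U_add_two ℤ (d : ℤ)
    push_cast
    push_cast at ih1 ih2
    linear_combination (norm := ring_nf) (U ℤ u) * h2 - (U ℤ v) * h1
      + 2 * (X : ℤ[X]) * ih2 - ih1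
      - (U ℤ u * U ℤ (v + 1) - U ℤ (u + 1) * U ℤ v) * h3

/-- The cross identity for Chebyshev polynomials of the second kind. -/
theorem chebyshevU_cross_identity (u v k r : ℕ) (hkr : k < r) :
    U ℤ (u + k : ℕ) * U ℤ (v + r : ℕ) - U ℤ (u + r : ℕ) * U ℤ (v + k : ℕ) =
      U ℤ (r - k - 1 : ℕ) *
        (U ℤ (u : ℕ) * U ℤ (v + 1 : ℕ) - U ℤ (u + 1 : ℕ) * U ℤ (v : ℕ)) := by
  set d : ℕ := r - k - 1 with hd
  have hr : (r : ℤ) = k + d + 1 := by omega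
  have h1 := cheb_cross ((u : ℤ) + k) ((v : ℤ) + k) d
  have h2 := cheb_shift (u : ℤ) (v : ℤ) k
  push_cast [hr]
  linear_combination (norm := ring_nf) h1 + (U ℤ (d : ℤ)) * h2
end
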